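/- arXiv:1810.07288 — 2 statements merged into one kernel-verified Lean document; each statement's English description precedes it below -/
import Mathlib

section
/- (Non-convex SGD rate under SGC) If f is L-smooth, bounded below by f*, and satisfies the strong growth condition E_z‖∇f(w,z)‖² ≤ ρ‖∇f(w)‖² (σ = 0), then t iterations of constant step-size SGD with η = 1/(ρL) give min_{k=0,…,t−1} E‖∇f(w_k)‖² ≤ (2ρL/t)[f(w₀) − f*]. -/
open scoped RealInnerProductSpace
open Finset

/-!
Smoothness gives the descent lemma `f (w - η g) ≤ f w - η ⟪∇f w, g⟫ + L η² / 2 ‖g‖²`. Averaging over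
the noise, unbiasedness turns the inner product into `‖∇f w‖²` and the strong growth condition
bounds the second moment by `ρ ‖∇f w‖²`, so with `η = 1 / (ρ L)` the expected objective drops by
`η / 2 · E ‖∇f (w_k)‖²` at every step. Telescoping over `t` steps and `f ≥ f*` bound the sum of
these expected squared gradient norms by `2 ρ L (f w₀ - f*)`, and the smallest of the `t` terms
is at most their mean.
-/

/-- Expectation over the first `k` steps of uniform i.i.d. noise in `Fin n`. -/
noncomputable def ExpN (n k : ℕ) (hn : 0 < n) (h : (ℕ → Fin n) → ℝ) : ℝ :=
  (∑ σ : Fin k → Fin n, h (fun i => if hi : i < k then σ ⟨i, hi⟩ else ⟨0, hn⟩)) / (n : ℝ) ^ k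

section Descent

variable {E : Type*} [NormedAddCommGroup E] [InnerProductSpace ℝ E] [CompleteSpace E]
  {f : E → ℝ} {f' : E → E} {L : ℝ}

theorem HasGradientAt.hasDerivAt_comp_add_smul {g x d : E} {s : ℝ}
    (hf : HasGradientAt f g (x + s • d)) : HasDerivAt (fun s : ℝ => f (x + s • d)) ⟪g, d⟫ s := by
  have hline : HasDerivAt (fun s : ℝ => x + s • d) d s := by
    simpa using ((hasDerivAt_id s).smul_const d).const_add x
  have h := hf.hasFDerivAt.comp_hasDerivAt s hline
  simp only [InnerProductSpace.toDual_apply_apply] at h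
  exact h

theorem image_le_add_inner_add_sq_of_lipschitzWith_gradient (hL : 0 ≤ L)
    (hgrad : ∀ v, HasGradientAt f (f' v) v) (hlip : LipschitzWith (Real.toNNReal L) f')
    (x y : E) : f y ≤ f x + ⟪f' x, y - x⟫ + L / 2 * ‖y - x‖ ^ 2 := by
  set d := y - x
  set g : ℝ → ℝ := fun s => f (x + s • d) - s * ⟪f' x, d⟫ - L / 2 * s ^ 2 * ‖d‖ ^ 2
  have hg : ∀ s, HasDerivAt g (⟪f' (x + s • d) - f' x, d⟫ - L * s * ‖d‖ ^ 2) s := by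
    intro s
    refine (((hgrad (x + s • d)).hasDerivAt_comp_add_smul.sub
      ((hasDerivAt_id s).mul_const ⟪f' x, d⟫)).sub
        (((hasDerivAt_pow 2 s).const_mul (L / 2)).mul_const (‖d‖ ^ 2))).congr_deriv ?_
    rw [inner_sub_left]
    ring
  have hg' : ∀ s ∈ interior (Set.Ici (0 : ℝ)),
      ⟪f' (x + s • d) - f' x, d⟫ - L * s * ‖d‖ ^ 2 ≤ 0 := by
    intro s hs
    rw [interior_Ici] at hs
    have hlip_s : ‖f' (x + s • d) - f' x‖ ≤ L * (s * ‖d‖) := by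
      simpa [dist_eq_norm, norm_smul, abs_of_pos (Set.mem_Ioi.1 hs), Real.coe_toNNReal L hL]
        using hlip.dist_le_mul (x + s • d) x
    have := real_inner_le_norm (f' (x + s • d) - f' x) d
    nlinarith [norm_nonneg d]
  have hanti : AntitoneOn g (Set.Ici 0) :=
    antitoneOn_of_hasDerivWithinAt_nonpos (convex_Ici 0)
      (fun s _ => (hg s).continuousAt.continuousWithinAt) (fun s _ => (hg s).hasDerivWithinAt) hg'
  have := hanti (Set.mem_Ici.2 le_rfl) (Set.mem_Ici.2 zero_le_one) zero_le_one
  simp only [g, d, one_smul, zero_smul, add_zero, add_sub_cancel] at this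
  linarith

end Descent

section ExpN

variable {n k : ℕ} {hn : 0 < n}

theorem ExpN_mono {h g : (ℕ → Fin n) → ℝ} (hle : ∀ ω, h ω ≤ g ω) :
    ExpN n k hn h ≤ ExpN n k hn g :=
  div_le_div_of_nonneg_right (sum_le_sum fun _ _ => hle _) (by positivity)

theorem ExpN_const (c : ℝ) : ExpN n k hn (fun _ => c) = c := by
  have : (n : ℝ) ^ k ≠ 0 := by positivity
  simp [ExpN, this]

theorem ExpN_sub (h g : (ℕ → Fin n) → ℝ) :
    ExpN n k hn (fun ω => h ω - g ω) = ExpN n k hn h - ExpN n k hn g := by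
  simp only [ExpN, sum_sub_distrib, sub_div]

theorem ExpN_const_mul (c : ℝ) (h : (ℕ → Fin n) → ℝ) :
    ExpN n k hn (fun ω => c * h ω) = c * ExpN n k hn h := by
  simp only [ExpN, ← mul_sum, mul_div_assoc]

theorem ExpN_succ (h : (ℕ → Fin n) → ℝ) :
    ExpN n (k + 1) hn h =
      ExpN n k hn (fun ω => 1 / (n : ℝ) * ∑ z, h (Function.update ω k z)) := by
  have hext : ∀ (σ : Fin k → Fin n) (z : Fin n),
      (fun i => if hi : i < k + 1 then (Fin.snoc σ z : Fin (k + 1) → Fin n) ⟨i, hi⟩ else ⟨0, hn⟩) =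
        Function.update (fun i => if hi : i < k then σ ⟨i, hi⟩ else ⟨0, hn⟩) k z := by
    intro σ z
    funext i
    rcases lt_trichotomy i k with hik | rfl | hki
    · simp [hik, Nat.lt_succ_of_lt hik, hik.ne, Fin.snoc, Fin.castLT]
    · simp [Fin.snoc]
    · simp [hki.ne', Nat.not_lt.2 hki.le, Nat.not_lt.2 (Nat.succ_le_of_lt hki)]
  have hsplit : ∀ F : (Fin (k + 1) → Fin n) → ℝ,
      ∑ τ, F τ = ∑ σ : Fin k → Fin n, ∑ z, F (Fin.snoc σ z) := by
    intro F
    rw [← (Fin.snocEquiv fun _ => Fin n).sum_comp, Fintype.sum_prod_type, sum_comm]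
    rfl
  simp only [ExpN, hsplit, hext, ← mul_sum, pow_succ]
  field_simp

end ExpN

theorem iterate_eq_of_eqOn_Iio {E α : Type*} {T : E → α → E} {W : (ℕ → α) → ℕ → E} {w0 : E}
    (hW0 : ∀ ω, W ω 0 = w0) (hWs : ∀ ω k, W ω (k + 1) = T (W ω k) (ω k)) :
    ∀ {k : ℕ} {ω ω' : ℕ → α}, Set.EqOn ω ω' (Set.Iio k) → W ω k = W ω' k
  | 0, ω, ω', _ => by rw [hW0, hW0]
  | k + 1, ω, ω', h => by
    rw [hWs, hWs, iterate_eq_of_eqOn_Iio hW0 hWs (h.mono (Set.Iio_subset_Iio k.le_succ)),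
      h (Set.mem_Iio.2 k.lt_succ_self)]

section SGD

variable {E : Type*} [NormedAddCommGroup E] [InnerProductSpace ℝ E] [CompleteSpace E]
  {f : E → ℝ} {f' : E → E} {L : ℝ}

theorem average_image_sgd_step_le {n : ℕ} (hn : 0 < n) {G : E → Fin n → E} {ρ : ℝ}
    (hL : 0 ≤ L) (hgrad : ∀ v, HasGradientAt f (f' v) v)
    (hlip : LipschitzWith (Real.toNNReal L) f')
    (hunbiased : ∀ v, (1 / (n : ℝ)) • ∑ z, G v z = f' v)
    (hsgc : ∀ v, (1 / (n : ℝ)) * ∑ z, ‖G v z‖ ^ 2 ≤ ρ * ‖f' v‖ ^ 2) (η : ℝ) (u : E) :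
    1 / (n : ℝ) * ∑ z, f (u - η • G u z) ≤ f u - η * (1 - L * ρ * η / 2) * ‖f' u‖ ^ 2 := by
  have hdescent : ∀ z, f (u - η • G u z) ≤
      f u - η * ⟪f' u, G u z⟫ + L * η ^ 2 / 2 * ‖G u z‖ ^ 2 := by
    intro z
    have h := image_le_add_inner_add_sq_of_lipschitzWith_gradient hL hgrad hlip u (u - η • G u z)
    rw [sub_sub_cancel_left, inner_neg_right, real_inner_smul_right, norm_neg, norm_smul,
      Real.norm_eq_abs, mul_pow, sq_abs] at h
    linarith
  have hinner : 1 / (n : ℝ) * ∑ z, ⟪f' u, G u z⟫ = ‖f' u‖ ^ 2 := by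
    rw [← inner_sum, ← real_inner_smul_right, hunbiased, real_inner_self_eq_norm_sq]
  have hn' : (0 : ℝ) < n := by exact_mod_cast hn
  calc 1 / (n : ℝ) * ∑ z, f (u - η • G u z)
      ≤ 1 / (n : ℝ) * ∑ z, (f u - η * ⟪f' u, G u z⟫ + L * η ^ 2 / 2 * ‖G u z‖ ^ 2) := by
        gcongr with z; exact hdescent z
    _ = f u - η * (1 / (n : ℝ) * ∑ z, ⟪f' u, G u z⟫)
          + L * η ^ 2 / 2 * (1 / (n : ℝ) * ∑ z, ‖G u z‖ ^ 2) := by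
        simp only [sum_add_distrib, sum_sub_distrib, sum_const, card_univ, Fintype.card_fin,
          nsmul_eq_mul, ← mul_sum]
        field_simp
    _ ≤ f u - η * ‖f' u‖ ^ 2 + L * η ^ 2 / 2 * (ρ * ‖f' u‖ ^ 2) := by
        rw [hinner]
        have := mul_le_mul_of_nonneg_left (hsgc u) (by positivity : 0 ≤ L * η ^ 2 / 2)
        linarith
    _ = f u - η * (1 - L * ρ * η / 2) * ‖f' u‖ ^ 2 := by ring

theorem ExpN_sgd_succ_le {n : ℕ} (hn : 0 < n) {G : E → Fin n → E} {ρ η : ℝ}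
    {W : (ℕ → Fin n) → ℕ → E} {w0 : E} (hL : 0 ≤ L) (hgrad : ∀ v, HasGradientAt f (f' v) v)
    (hlip : LipschitzWith (Real.toNNReal L) f')
    (hunbiased : ∀ v, (1 / (n : ℝ)) • ∑ z, G v z = f' v)
    (hsgc : ∀ v, (1 / (n : ℝ)) * ∑ z, ‖G v z‖ ^ 2 ≤ ρ * ‖f' v‖ ^ 2)
    (hW0 : ∀ ω, W ω 0 = w0) (hWs : ∀ ω k, W ω (k + 1) = W ω k - η • G (W ω k) (ω k)) (k : ℕ) :
    ExpN n (k + 1) hn (fun ω => f (W ω (k + 1))) ≤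
      ExpN n k hn (fun ω => f (W ω k))
        - η * (1 - L * ρ * η / 2) * ExpN n k hn (fun ω => ‖f' (W ω k)‖ ^ 2) := by
  have hupdate : ∀ ω z, W (Function.update ω k z) (k + 1) = W ω k - η • G (W ω k) z := by
    intro ω z
    have hprefix : W (Function.update ω k z) k = W ω k :=
      iterate_eq_of_eqOn_Iio (T := fun w z => w - η • G w z) hW0 hWs
        fun i hi => Function.update_of_ne (Set.mem_Iio.1 hi).ne z ω
    rw [hWs, hprefix, Function.update_self]
  rw [ExpN_succ, ← ExpN_const_mul, ← ExpN_sub]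
  refine ExpN_mono fun ω => ?_
  simpa only [hupdate] using average_image_sgd_step_le hn hL hgrad hlip hunbiased hsgc η (W ω k)

end SGD

theorem exists_lt_le_of_le_sub_mul {A B : ℕ → ℝ} {c m : ℝ} {t : ℕ} (hc : 0 < c) (ht : 0 < t)
    (hstep : ∀ k, A (k + 1) ≤ A k - c * B k) (hlow : m ≤ A t) :
    ∃ k < t, B k ≤ (A 0 - m) / (c * t) := by
  have htel : ∀ j, c * ∑ k ∈ range j, B k ≤ A 0 - A j := by
    intro j
    induction j with
    | zero => simp
    | succ j ih => rw [sum_range_succ, mul_add]; linarith [hstep j]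
  have hsum : ∑ k ∈ range t, B k ≤ ∑ _k ∈ range t, (A 0 - m) / (c * t) := by
    have ht' : (t : ℝ) ≠ 0 := by positivity
    calc ∑ k ∈ range t, B k ≤ (A 0 - m) / c := by rw [le_div_iff₀' hc]; linarith [htel t]
      _ = _ := by rw [sum_const, card_range, nsmul_eq_mul]; field_simp
  obtain ⟨k, hk, hle⟩ := exists_le_of_sum_le (nonempty_range_iff.2 ht.ne') hsum
  exact ⟨k, mem_range.1 hk, hle⟩

/-- Non-convex SGD rate under the strong growth condition:
with `η = 1/(ρL)`, after `t` iterations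
`min_{k<t} E‖∇f(w_k)‖² ≤ (2ρL/t)(f(w₀) − f*)`. -/
theorem sgd_nonconvex_rate_sgc
    (d n : ℕ) (hn : 0 < n)
    (f : EuclideanSpace ℝ (Fin d) → ℝ)
    (f' : EuclideanSpace ℝ (Fin d) → EuclideanSpace ℝ (Fin d))
    (G : EuclideanSpace ℝ (Fin d) → Fin n → EuclideanSpace ℝ (Fin d))
    (ρ L fstar η : ℝ) (w0 : EuclideanSpace ℝ (Fin d))
    (W : (ℕ → Fin n) → ℕ → EuclideanSpace ℝ (Fin d))
    (hL : 0 < L) (hρ : 0 < ρ)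
    (hgrad : ∀ v, HasGradientAt f (f' v) v)
    (hlip : LipschitzWith (Real.toNNReal L) f')
    (hbelow : ∀ v, fstar ≤ f v)
    (hunbiased : ∀ v, (1 / (n : ℝ)) • ∑ z, G v z = f' v)
    (hsgc : ∀ v, (1 / (n : ℝ)) * ∑ z, ‖G v z‖ ^ 2 ≤ ρ * ‖f' v‖ ^ 2)
    (hη : η = 1 / (ρ * L))
    (hW0 : ∀ ω, W ω 0 = w0)
    (hWs : ∀ ω k, W ω (k + 1) = W ω k - η • G (W ω k) (ω k))
    (t : ℕ) (ht : 0 < t) :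
    ∃ k < t, ExpN n k hn (fun ω => ‖f' (W ω k)‖ ^ 2)
      ≤ (2 * ρ * L / t) * (f w0 - fstar) := by
  have hη_pos : 0 < η := by rw [hη]; positivity
  have hcoeff : η * (1 - L * ρ * η / 2) = η / 2 := by
    rw [hη]; field_simp; ring
  have hstep := ExpN_sgd_succ_le hn hL.le hgrad hlip hunbiased hsgc hW0 hWs
  simp only [hcoeff] at hstep
  have hlow : fstar ≤ ExpN n t hn (fun ω => f (W ω t)) :=
    (ExpN_const fstar).ge.trans (ExpN_mono fun _ => hbelow _)
  obtain ⟨k, hk, hle⟩ :=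
    exists_lt_le_of_le_sub_mul (A := fun k => ExpN n k hn fun ω => f (W ω k))
      (half_pos hη_pos) ht hstep hlow
  refine ⟨k, hk, hle.trans_eq ?_⟩
  simp only [hW0, ExpN_const, hη]
  field_simp
end

section
/- (Accelerated rate, convex, SGC) Suppose f is convex and L-smooth with minimizer w*, and its unbiased stochastic gradients satisfy the strong growth condition E_z‖∇f(w,z)‖² ≤ ρ‖∇f(w)‖². Then SGD with Nesterov acceleration (the three-sequence scheme with step-size η = 1/(ρL) and parameters γ_k = (1/ρ + √(1/ρ² + 4γ_{k−1}²))/2, a_{k+1} = γ_k√(ηρ), α_k = γ_kη/(γ_kη + a_k²), β_k = 1) satisfies E[f(w_{k+1})] − f(w*) ≤ 2ρ²L‖w₀ − w*‖²/k². -/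
/-!
The potential `Φ_m = ‖v_m - w*‖² + 2 a_m² (f(w_m) - f(w*))` does not increase in expectation.
In one step, the descent lemma bounds the new function value and the strong growth condition
bounds the second moment of the stochastic gradient; since `a_{m+1}² = γ_m² η ρ` and `η ρ L = 1`,
the two variance terms cancel exactly. The remaining cross term `γ_m η ⟪v_m - w*, ∇f(ζ_m)⟫`
splits, through `ζ_m = α_m v_m + (1 - α_m) w_m` and the choice of `α_m`, into the first-order
convexity inequalities at `w_m` and at `w*` with weights `a_m²` and `γ_m η`, and
`a_{m+1}² = a_m² + γ_m η` closes the recursion. As `a_1 = 0`, `Φ_1 = ‖w₀ - w*‖²`, and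
`γ_k ≥ k / (2ρ)` turns `2 a_{k+1}² (E f(w_{k+1}) - f(w*)) ≤ ‖w₀ - w*‖²` into the rate.
-/

open scoped RealInnerProductSpace
open Finset

open scoped NNReal

section Gradient

variable {E : Type*} [NormedAddCommGroup E] [InnerProductSpace ℝ E] [CompleteSpace E]
  {f : E → ℝ}

theorem HasGradientAt.hasDerivAt_comp_line {g x d : E} {t : ℝ}
    (hf : HasGradientAt f g (x + t • d)) :
    HasDerivAt (fun s : ℝ => f (x + s • d)) ⟪g, d⟫ t := by
  have hline : HasDerivAt (fun s : ℝ => x + s • d) d t := by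
    simpa using ((hasDerivAt_id t).smul_const d).const_add x
  simpa [Function.comp_def] using (hasGradientAt_iff_hasFDerivAt.1 hf).comp_hasDerivAt t hline

theorem ConvexOn.add_inner_le_of_hasGradientAt (hf : ConvexOn ℝ Set.univ f) {g x : E}
    (hx : HasGradientAt f g x) (y : E) : f x + ⟪g, y - x⟫ ≤ f y := by
  have hline : ConvexOn ℝ Set.univ (fun t : ℝ => f (x + t • (y - x))) := by
    simpa [Function.comp_def, AffineMap.lineMap_apply_module', add_comm] using
      hf.comp_affineMap (AffineMap.lineMap x y)
  have hderiv := hline.le_slope_of_hasDerivAt (Set.mem_univ 0) (Set.mem_univ 1) one_pos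
    (HasGradientAt.hasDerivAt_comp_line (by simpa using hx))
  simp only [slope_def_field, one_smul, add_sub_cancel, zero_smul, add_zero, sub_zero,
    div_one] at hderiv
  linarith

theorem le_add_inner_add_of_lipschitzWith_gradient {f' : E → E} {K : ℝ≥0}
    (hgrad : ∀ u, HasGradientAt f (f' u) u) (hlip : LipschitzWith K f') (x y : E) :
    f y ≤ f x + ⟪f' x, y - x⟫ + K / 2 * ‖y - x‖ ^ 2 := by
  set d := y - x
  have hbound := image_le_of_deriv_right_le_deriv_boundary (a := 0) (b := 1)
    (f := fun t : ℝ => f (x + t • d)) (f' := fun t => ⟪f' (x + t • d), d⟫)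
    (B := fun t => f x + t * ⟪f' x, d⟫ + K / 2 * ‖d‖ ^ 2 * t ^ 2)
    (B' := fun t => ⟪f' x, d⟫ + K * ‖d‖ ^ 2 * t)
    (fun t _ => (hgrad _).hasDerivAt_comp_line.continuousAt.continuousWithinAt)
    (fun t _ => (hgrad _).hasDerivAt_comp_line.hasDerivWithinAt) (by simp)
    (by fun_prop)
    (fun t _ => by
      have h := (((hasDerivAt_id t).mul_const ⟪f' x, d⟫).const_add (f x)).add
        ((hasDerivAt_pow 2 t).const_mul (K / 2 * ‖d‖ ^ 2))
      exact (h.congr_deriv (by ring)).hasDerivWithinAt)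
    (fun t ht => by
      have hlip_t : ⟪f' (x + t • d) - f' x, d⟫ ≤ K * ‖d‖ ^ 2 * t := by
        calc ⟪f' (x + t • d) - f' x, d⟫ ≤ ‖f' (x + t • d) - f' x‖ * ‖d‖ := real_inner_le_norm _ _
          _ ≤ K * ‖x + t • d - x‖ * ‖d‖ := by gcongr; exact hlip.norm_sub_le _ _
          _ = K * ‖d‖ ^ 2 * t := by
            rw [add_sub_cancel_left, norm_smul, Real.norm_of_nonneg ht.1]; ring
      rw [inner_sub_left] at hlip_t
      linarith)
    (Set.right_mem_Icc.2 zero_le_one)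
  simpa [d] using hbound

theorem mean_sgd_potential_le {n : ℕ} (hn : 0 < n) {f' : E → E} {K : ℝ≥0} {ρ : ℝ}
    (hgrad : ∀ u, HasGradientAt f (f' u) u) (hlip : LipschitzWith K f')
    {ζ : E} {g : Fin n → E} (hunbiased : (1 / (n : ℝ)) • ∑ z, g z = f' ζ)
    (hsgc : (1 / (n : ℝ)) * ∑ z, ‖g z‖ ^ 2 ≤ ρ * ‖f' ζ‖ ^ 2)
    (V p : E) {c B η : ℝ} (hB : 0 ≤ B) (hcoef : (c ^ 2 + B * K * η ^ 2) * ρ ≤ 2 * B * η) :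
    (∑ z, (‖V - c • g z - p‖ ^ 2 + 2 * B * (f (ζ - η • g z) - f p))) / (n : ℝ)
      ≤ ‖V - p‖ ^ 2 - 2 * c * ⟪V - p, f' ζ⟫ + 2 * B * (f ζ - f p) := by
  have hn' : (n : ℝ) ≠ 0 := by positivity
  have hsample : ∀ z, ‖V - c • g z - p‖ ^ 2 + 2 * B * (f (ζ - η • g z) - f p)
      ≤ ‖V - p‖ ^ 2 + 2 * B * (f ζ - f p) - 2 * c * ⟪V - p, g z⟫ - 2 * B * η * ⟪f' ζ, g z⟫
        + (c ^ 2 + B * K * η ^ 2) * ‖g z‖ ^ 2 := by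
    intro z
    have hdescent := le_add_inner_add_of_lipschitzWith_gradient hgrad hlip ζ (ζ - η • g z)
    rw [sub_sub_cancel_left, inner_neg_right, inner_smul_right, norm_neg, norm_smul,
      Real.norm_eq_abs, mul_pow, sq_abs] at hdescent
    have hnorm :
        ‖V - c • g z - p‖ ^ 2 = ‖V - p‖ ^ 2 - 2 * c * ⟪V - p, g z⟫ + c ^ 2 * ‖g z‖ ^ 2 := by
      rw [sub_right_comm, norm_sub_sq_real, inner_smul_right, norm_smul, Real.norm_eq_abs,
        mul_pow, sq_abs]
      ring
    rw [hnorm]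
    nlinarith
  have hmean_inner : ∀ X : E, (∑ z, ⟪X, g z⟫) / n = ⟪X, f' ζ⟫ := by
    intro X
    rw [← hunbiased, inner_smul_right, inner_sum]
    field_simp
  calc (∑ z, (‖V - c • g z - p‖ ^ 2 + 2 * B * (f (ζ - η • g z) - f p))) / (n : ℝ)
      ≤ (∑ z, (‖V - p‖ ^ 2 + 2 * B * (f ζ - f p) - 2 * c * ⟪V - p, g z⟫
          - 2 * B * η * ⟪f' ζ, g z⟫ + (c ^ 2 + B * K * η ^ 2) * ‖g z‖ ^ 2)) / n :=
        div_le_div_of_nonneg_right (sum_le_sum fun z _ => hsample z) (by positivity)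
    _ = ‖V - p‖ ^ 2 + 2 * B * (f ζ - f p) - 2 * c * ⟪V - p, f' ζ⟫ - 2 * B * η * ‖f' ζ‖ ^ 2
          + (c ^ 2 + B * K * η ^ 2) * ((1 / (n : ℝ)) * ∑ z, ‖g z‖ ^ 2) := by
        rw [← hmean_inner, ← real_inner_self_eq_norm_sq (f' ζ), ← hmean_inner]
        simp only [sum_add_distrib, sum_sub_distrib, ← mul_sum,
          sum_const, card_univ, Fintype.card_fin, nsmul_eq_mul]
        field_simp
    _ ≤ ‖V - p‖ ^ 2 - 2 * c * ⟪V - p, f' ζ⟫ + 2 * B * (f ζ - f p) := by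
        have hcoef_nonneg : 0 ≤ c ^ 2 + B * K * η ^ 2 := by positivity
        nlinarith [mul_le_mul_of_nonneg_left hsgc hcoef_nonneg, sq_nonneg ‖f' ζ‖]

theorem ConvexOn.add_mul_sub_le_mul_inner (hf : ConvexOn ℝ Set.univ f) {g ζ V W p : E}
    (hζ : HasGradientAt f g ζ) {α c A : ℝ} (hζ_def : ζ = α • V + (1 - α) • W)
    (hc : 0 ≤ c) (hA : 0 ≤ A) (hcA : c * (1 - α) = A * α) :
    A * (f ζ - f W) + c * (f ζ - f p) ≤ c * ⟪V - p, g⟫ := by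
  have hW := hf.add_inner_le_of_hasGradientAt hζ W
  have hp := hf.add_inner_le_of_hasGradientAt hζ p
  have hsplit : c * ⟪V - p, g⟫ = A * ⟪g, ζ - W⟫ + c * ⟪g, ζ - p⟫ := by
    have h1 : V - p = (1 - α) • (V - W) + (ζ - p) := by rw [hζ_def]; module
    have h2 : ζ - W = α • (V - W) := by rw [hζ_def]; module
    rw [h1, h2, real_inner_comm, inner_add_right, real_inner_smul_right, real_inner_smul_right]
    linear_combination ⟪g, V - W⟫ * hcA
  rw [inner_sub_right] at hW hp
  rw [hsplit, inner_sub_right, inner_sub_right]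
  linarith [mul_le_mul_of_nonneg_left hW hA, mul_le_mul_of_nonneg_left hp hc]

theorem mean_potential_step_le {n : ℕ} (hn : 0 < n) {f' : E → E} {G : E → Fin n → E}
    {K : ℝ≥0} {ρ : ℝ} (hconv : ConvexOn ℝ Set.univ f) (hgrad : ∀ u, HasGradientAt f (f' u) u)
    (hlip : LipschitzWith K f') (hunbiased : ∀ u, (1 / (n : ℝ)) • ∑ z, G u z = f' u)
    (hsgc : ∀ u, (1 / (n : ℝ)) * ∑ z, ‖G u z‖ ^ 2 ≤ ρ * ‖f' u‖ ^ 2)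
    {η g α A A' : ℝ} (hηρK : η * ρ * K = 1) (hη : 0 ≤ η) (hg : 0 ≤ g) (hA : 0 ≤ A)
    (hA' : A' = A + g * η) (hA'g : A' = g ^ 2 * η * ρ) (hα : g * η * (1 - α) = A * α)
    {ζ V W : E} (hζ : ζ = α • V + (1 - α) • W) (p : E) :
    (∑ z, (‖V - (g * η) • G ζ z - p‖ ^ 2 + 2 * A' * (f (ζ - η • G ζ z) - f p))) / (n : ℝ)
      ≤ ‖V - p‖ ^ 2 + 2 * A * (f W - f p) := by
  have hcoef : ((g * η) ^ 2 + A' * K * η ^ 2) * ρ ≤ 2 * A' * η := by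
    linear_combination (-η) * hA'g + (A' * η) * hηρK
  have hmean := mean_sgd_potential_le hn hgrad hlip (hunbiased ζ) (hsgc ζ) V p
    (by rw [hA']; positivity) hcoef
  have hcouple := hconv.add_mul_sub_le_mul_inner (p := p) (hgrad ζ) hζ (by positivity) hA hα
  rw [hA'] at hmean ⊢
  linarith

end Gradient

namespace ExpN

variable {n k : ℕ} {hn : 0 < n}

theorem const (c : ℝ) : ExpN n k hn (fun _ => c) = c := by
  have : (n : ℝ) ≠ 0 := by positivity
  simp only [ExpN, sum_const, card_univ, Fintype.card_pi, Fintype.card_fin, prod_const,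
    nsmul_eq_mul, Nat.cast_pow]
  field_simp

theorem mono {h g : (ℕ → Fin n) → ℝ} (hle : ∀ ω, h ω ≤ g ω) : ExpN n k hn h ≤ ExpN n k hn g := by
  unfold ExpN
  gcongr with σ
  exact hle _

theorem mul_add (h : (ℕ → Fin n) → ℝ) (c b : ℝ) :
    ExpN n k hn (fun ω => c * h ω + b) = c * ExpN n k hn h + b := by
  have : (n : ℝ) ^ k ≠ 0 := by positivity
  simp only [ExpN, sum_add_distrib, ← mul_sum, sum_const, card_univ,
    Fintype.card_fun, Fintype.card_fin, nsmul_eq_mul]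
  push_cast
  field_simp

theorem update_pad (τ : Fin k → Fin n) (z : Fin n) :
    Function.update (fun i => if hi : i < k then τ ⟨i, hi⟩ else ⟨0, hn⟩) k z
      = fun i => if hi : i < k + 1 then (Fin.snoc τ z : Fin (k + 1) → Fin n) ⟨i, hi⟩
          else ⟨0, hn⟩ := by
  funext i
  rcases lt_trichotomy i k with hik | rfl | hik
  · simp [Function.update_of_ne hik.ne, hik, Nat.lt_succ_of_lt hik, Fin.snoc, Fin.castLT]
  · simp [Fin.snoc]
  · simp only [Function.update_of_ne hik.ne', hik.not_gt, ↓reduceDIte, right_eq_dite_iff]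
    omega

theorem succ (h : (ℕ → Fin n) → ℝ) :
    ExpN n (k + 1) hn h = ExpN n k hn (fun ω => (∑ z, h (Function.update ω k z)) / n) := by
  have : (n : ℝ) ≠ 0 := by positivity
  simp only [ExpN, update_pad]
  rw [← (Fin.snocEquiv fun _ => Fin n).sum_comp, Fintype.sum_prod_type_right, pow_succ,
    ← sum_div, div_div, mul_comm]
  rfl

end ExpN

theorem apply_update_self_of_succ {ι β : Type*} {X : (ℕ → ι) → ℕ → β} (F : ℕ → β → ι → β)
    (h0 : ∀ ω ω', X ω 0 = X ω' 0) (hX : ∀ ω k, X ω (k + 1) = F k (X ω k) (ω k))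
    (ω : ℕ → ι) (k : ℕ) (z : ι) : X (Function.update ω k z) k = X ω k := by
  suffices ∀ j ≤ k, X (Function.update ω k z) j = X ω j from this k le_rfl
  intro j hj
  induction j with
  | zero => exact h0 _ _
  | succ j ih => rw [hX, hX, ih (by omega), Function.update_of_ne (by omega)]

section NesterovCoefficients

variable {ρ : ℝ}

theorem mul_sq_nesterov_seq_succ (hρ : ρ ≠ 0) {γ : ℕ → ℝ}
    (hγ : ∀ k, γ (k + 1) = (1 / ρ + √(1 / ρ ^ 2 + 4 * γ k ^ 2)) / 2) (m : ℕ) :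
    ρ * γ (m + 1) ^ 2 = γ (m + 1) + ρ * γ m ^ 2 := by
  have hsq := Real.sq_sqrt (by positivity : 0 ≤ 1 / ρ ^ 2 + 4 * γ m ^ 2)
  rw [hγ]
  linear_combination (ρ / 4) * hsq
    + ((1 / ρ + √(1 / ρ ^ 2 + 4 * γ m ^ 2)) / 2) * mul_inv_cancel₀ hρ

theorem add_le_nesterov_coeff (hρ : 0 < ρ) (x : ℝ) :
    x + 1 / (2 * ρ) ≤ (1 / ρ + √(1 / ρ ^ 2 + 4 * x ^ 2)) / 2 := by
  have : 2 * x ≤ √(1 / ρ ^ 2 + 4 * x ^ 2) :=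
    Real.le_sqrt_of_sq_le (by nlinarith [(by positivity : 0 < 1 / ρ ^ 2)])
  linarith [(by field_simp : 1 / (2 * ρ) = 1 / ρ / 2)]

theorem div_le_nesterov_seq (hρ : 0 < ρ) {γ : ℕ → ℝ} (hγ0 : γ 0 = 0)
    (hγ : ∀ k, γ (k + 1) = (1 / ρ + √(1 / ρ ^ 2 + 4 * γ k ^ 2)) / 2) (m : ℕ) :
    m / (2 * ρ) ≤ γ m := by
  induction m with
  | zero => simp [hγ0]
  | succ m ih =>
    rw [hγ, Nat.cast_succ, add_div]
    exact (add_le_add_left ih _).trans (add_le_nesterov_coeff hρ _)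

theorem nesterov_schedule_relations (hρ : 0 < ρ) {η : ℝ} (hη : 0 < η) {γ a α : ℕ → ℝ}
    (hγ0 : γ 0 = 0) (hγ : ∀ k, γ (k + 1) = (1 / ρ + √(1 / ρ ^ 2 + 4 * γ k ^ 2)) / 2)
    (ha_sq : ∀ m, a (m + 1) ^ 2 = γ m ^ 2 * η * ρ)
    (hα : ∀ k, α k = γ k * η / (γ k * η + a k ^ 2)) (m : ℕ) :
    a (m + 1 + 1) ^ 2 = a (m + 1) ^ 2 + γ (m + 1) * η
      ∧ γ (m + 1) * η * (1 - α (m + 1)) = a (m + 1) ^ 2 * α (m + 1) := by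
  constructor
  · linear_combination ha_sq (m + 1) - ha_sq m + η * mul_sq_nesterov_seq_succ hρ.ne' hγ m
  · have : 0 < γ (m + 1) := lt_of_lt_of_le (by positivity) (div_le_nesterov_seq hρ hγ0 hγ (m + 1))
    rw [hα]
    field_simp
    ring

end NesterovCoefficients

section Potential

variable {E : Type*} [NormedAddCommGroup E]

def nesterovPotential {ι : Type*} (f : E → ℝ) (p : E) (a : ℕ → ℝ) (w v : (ℕ → ι) → ℕ → E)
    (m : ℕ) (ω : ℕ → ι) : ℝ :=
  ‖v ω m - p‖ ^ 2 + 2 * a m ^ 2 * (f (w ω m) - f p)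

theorem mul_ExpN_sub_le_ExpN_nesterovPotential {n k : ℕ} (hn : 0 < n) (f : E → ℝ) (p : E)
    (a : ℕ → ℝ) (w v : (ℕ → Fin n) → ℕ → E) (m : ℕ) :
    2 * a m ^ 2 * (ExpN n k hn (fun ω => f (w ω m)) - f p)
      ≤ ExpN n k hn (nesterovPotential f p a w v m) := by
  rw [mul_sub, sub_eq_add_neg, ← ExpN.mul_add]
  exact ExpN.mono fun ω => by
    simp only [nesterovPotential]; nlinarith [sq_nonneg ‖v ω m - p‖]

variable [InnerProductSpace ℝ E] [CompleteSpace E]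

theorem ExpN_nesterovPotential_le {n : ℕ} (hn : 0 < n) {f : E → ℝ} {f' : E → E}
    {G : E → Fin n → E} {K : ℝ≥0} {ρ η : ℝ} (hconv : ConvexOn ℝ Set.univ f)
    (hgrad : ∀ u, HasGradientAt f (f' u) u) (hlip : LipschitzWith K f')
    (hunbiased : ∀ u, (1 / (n : ℝ)) • ∑ z, G u z = f' u)
    (hsgc : ∀ u, (1 / (n : ℝ)) * ∑ z, ‖G u z‖ ^ 2 ≤ ρ * ‖f' u‖ ^ 2)
    (hηρK : η * ρ * K = 1) (hη : 0 ≤ η) {γ a α : ℕ → ℝ} (hγ : ∀ m, 0 ≤ γ (m + 1))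
    (ha_succ : ∀ m, a (m + 1 + 1) ^ 2 = a (m + 1) ^ 2 + γ (m + 1) * η)
    (ha_sq : ∀ m, a (m + 1 + 1) ^ 2 = γ (m + 1) ^ 2 * η * ρ)
    (hα : ∀ m, γ (m + 1) * η * (1 - α (m + 1)) = a (m + 1) ^ 2 * α (m + 1))
    {w0 : E} {w ζ v : (ℕ → Fin n) → ℕ → E}
    (hw0 : ∀ ω, w ω 0 = w0) (hv0 : ∀ ω, v ω 0 = w0)
    (hζ : ∀ ω k, ζ ω k = α k • v ω k + (1 - α k) • w ω k)
    (hw : ∀ ω k, w ω (k + 1) = ζ ω k - η • G (ζ ω k) (ω k))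
    (hv : ∀ ω k, v ω (k + 1) = v ω k - (γ k * η) • G (ζ ω k) (ω k)) (p : E) (k : ℕ) :
    ExpN n (k + 1) hn (nesterovPotential f p a w v (k + 1))
      ≤ ExpN n 1 hn (nesterovPotential f p a w v 1) := by
  -- `(w_m, v_m)` does not see `ω m`, so resampling `ω m` only affects the step to time `m + 1`.
  have hstate := apply_update_self_of_succ (X := fun ω m => (w ω m, v ω m))
    (fun m q z => ((α m • q.2 + (1 - α m) • q.1) - η • G (α m • q.2 + (1 - α m) • q.1) z,
      q.2 - (γ m * η) • G (α m • q.2 + (1 - α m) • q.1) z))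
    (by simp [hw0, hv0]) (by simp [hw, hv, hζ])
  refine antitone_nat_of_succ_le
    (f := fun m => ExpN n (m + 1) hn (nesterovPotential f p a w v (m + 1))) (fun m => ?_)
    (Nat.zero_le k)
  rw [ExpN.succ]
  refine ExpN.mono fun ω => ?_
  have hnext : ∀ z, nesterovPotential f p a w v (m + 1 + 1) (Function.update ω (m + 1) z)
      = ‖v ω (m + 1) - (γ (m + 1) * η) • G (ζ ω (m + 1)) z - p‖ ^ 2
        + 2 * a (m + 1 + 1) ^ 2 * (f (ζ ω (m + 1) - η • G (ζ ω (m + 1)) z) - f p) := by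
    intro z
    obtain ⟨hw_eq, hv_eq⟩ := Prod.ext_iff.1 (hstate ω (m + 1) z)
    simp only [nesterovPotential, hv _ (m + 1), hw _ (m + 1), hζ _ (m + 1), Function.update_self]
    simp only at hw_eq hv_eq
    rw [hw_eq, hv_eq, ← hζ]
  simp only [hnext]
  exact mean_potential_step_le hn hconv hgrad hlip hunbiased hsgc hηρK hη (hγ m) (sq_nonneg _)
    (ha_succ m) (ha_sq m) (hα m) (hζ ω (m + 1)) p

end Potential

theorem accelerated_sgd_convex_sgc_general
    (d n : ℕ) (hn : 0 < n)
    (f : EuclideanSpace ℝ (Fin d) → ℝ)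
    (f' : EuclideanSpace ℝ (Fin d) → EuclideanSpace ℝ (Fin d))
    (G : EuclideanSpace ℝ (Fin d) → Fin n → EuclideanSpace ℝ (Fin d))
    (ρ L η : ℝ) (w0 wstar : EuclideanSpace ℝ (Fin d))
    (γ a α : ℕ → ℝ)
    (w ζ v : (ℕ → Fin n) → ℕ → EuclideanSpace ℝ (Fin d))
    (hL : 0 < L) (hρ : 1 ≤ ρ)
    (hconv : ConvexOn ℝ Set.univ f)
    (hgrad : ∀ u, HasGradientAt f (f' u) u)
    (hlip : LipschitzWith (Real.toNNReal L) f')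
    (hunbiased : ∀ u, (1 / (n : ℝ)) • ∑ z, G u z = f' u)
    (hsgc : ∀ u, (1 / (n : ℝ)) * ∑ z, ‖G u z‖ ^ 2 ≤ ρ * ‖f' u‖ ^ 2)
    (hη : η = 1 / (ρ * L))
    (hγ0 : γ 0 = 0)
    (hγ : ∀ k, γ (k + 1) = (1 / ρ + Real.sqrt (1 / ρ ^ 2 + 4 * (γ k) ^ 2)) / 2)
    (ha : ∀ k, a (k + 1) = γ k * Real.sqrt (η * ρ))
    (hα : ∀ k, α k = γ k * η / (γ k * η + (a k) ^ 2))
    (hw0 : ∀ ω, w ω 0 = w0) (hv0 : ∀ ω, v ω 0 = w0)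
    (hζ : ∀ ω k, ζ ω k = α k • v ω k + (1 - α k) • w ω k)
    (hw : ∀ ω k, w ω (k + 1) = ζ ω k - η • G (ζ ω k) (ω k))
    (hv : ∀ ω k, v ω (k + 1) = v ω k - (γ k * η) • G (ζ ω k) (ω k)) :
    ∀ k : ℕ, 1 ≤ k →
      ExpN n (k + 1) hn (fun ω => f (w ω (k + 1))) - f wstar
        ≤ 2 * ρ ^ 2 * L * ‖w0 - wstar‖ ^ 2 / (k : ℝ) ^ 2 := by
  intro k hk
  have hρ0 : 0 < ρ := by linarith
  have hη0 : 0 < η := by rw [hη]; positivity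
  have hηρL : η * ρ * (Real.toNNReal L : ℝ) = 1 := by
    rw [Real.coe_toNNReal _ hL.le, hη]; field_simp
  have hγ_ge := div_le_nesterov_seq hρ0 hγ0 hγ
  have ha_sq : ∀ m, a (m + 1) ^ 2 = γ m ^ 2 * η * ρ := fun m => by
    rw [ha, mul_pow, Real.sq_sqrt (by positivity)]; ring
  have hrel := nesterov_schedule_relations hρ0 hη0 hγ0 hγ ha_sq hα
  have hbound := ExpN_nesterovPotential_le hn hconv hgrad hlip hunbiased hsgc hηρL hη0.le
    (fun m => (hγ_ge (m + 1)).trans' (by positivity)) (fun m => (hrel m).1)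
    (fun m => ha_sq (m + 1)) (fun m => (hrel m).2) hw0 hv0 hζ hw hv wstar k
  have hΦ1 : nesterovPotential f wstar a w v 1 = fun _ => ‖w0 - wstar‖ ^ 2 := by
    funext ω; simp [nesterovPotential, hv ω 0, hv0, hγ0, ha 0]
  rw [hΦ1, ExpN.const] at hbound
  have hcoef : (k : ℝ) ^ 2 / (2 * ρ ^ 2 * L) ≤ 2 * a (k + 1) ^ 2 :=
    calc (k : ℝ) ^ 2 / (2 * ρ ^ 2 * L) = 2 * ((k / (2 * ρ)) ^ 2 * η * ρ) := by
          rw [hη]; field_simp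
      _ ≤ 2 * a (k + 1) ^ 2 := by rw [ha_sq]; gcongr; exact hγ_ge k
  have hcoef_pos : 0 < (k : ℝ) ^ 2 / (2 * ρ ^ 2 * L) := by positivity
  calc ExpN n (k + 1) hn (fun ω => f (w ω (k + 1))) - f wstar
      ≤ ‖w0 - wstar‖ ^ 2 / (2 * a (k + 1) ^ 2) :=
        (le_div_iff₀' (hcoef_pos.trans_le hcoef)).2
          ((mul_ExpN_sub_le_ExpN_nesterovPotential hn f wstar a w v _).trans hbound)
    _ ≤ ‖w0 - wstar‖ ^ 2 / ((k : ℝ) ^ 2 / (2 * ρ ^ 2 * L)) :=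
        div_le_div_of_nonneg_left (by positivity) hcoef_pos hcoef
    _ = 2 * ρ ^ 2 * L * ‖w0 - wstar‖ ^ 2 / (k : ℝ) ^ 2 := by field_simp

/-- Accelerated rate for convex functions under the strong growth
condition: Nesterov-accelerated SGD with `η = 1/(ρL)` and the stated parameter
sequences achieves `E f(w_{k+1}) − f(w*) ≤ 2ρ²L‖w₀ − w*‖²/k²`. -/
theorem accelerated_sgd_convex_sgc
    (d n : ℕ) (hn : 0 < n)
    (f : EuclideanSpace ℝ (Fin d) → ℝ)
    (f' : EuclideanSpace ℝ (Fin d) → EuclideanSpace ℝ (Fin d))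
    (G : EuclideanSpace ℝ (Fin d) → Fin n → EuclideanSpace ℝ (Fin d))
    (ρ L η : ℝ) (w0 wstar : EuclideanSpace ℝ (Fin d))
    (γ a α : ℕ → ℝ)
    (w ζ v : (ℕ → Fin n) → ℕ → EuclideanSpace ℝ (Fin d))
    (hL : 0 < L) (hρ : 1 ≤ ρ)
    (hconv : ConvexOn ℝ Set.univ f)
    (hgrad : ∀ u, HasGradientAt f (f' u) u)
    (hlip : LipschitzWith (Real.toNNReal L) f')
    (hmin : ∀ u, f wstar ≤ f u)
    (hunbiased : ∀ u, (1 / (n : ℝ)) • ∑ z, G u z = f' u)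
    (hsgc : ∀ u, (1 / (n : ℝ)) * ∑ z, ‖G u z‖ ^ 2 ≤ ρ * ‖f' u‖ ^ 2)
    (hη : η = 1 / (ρ * L))
    (hγ0 : γ 0 = 0)
    (hγ : ∀ k, γ (k + 1) = (1 / ρ + Real.sqrt (1 / ρ ^ 2 + 4 * (γ k) ^ 2)) / 2)
    (ha0 : a 0 = 0)
    (ha : ∀ k, a (k + 1) = γ k * Real.sqrt (η * ρ))
    (hα : ∀ k, α k = γ k * η / (γ k * η + (a k) ^ 2))
    (hw0 : ∀ ω, w ω 0 = w0) (hv0 : ∀ ω, v ω 0 = w0)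
    (hζ : ∀ ω k, ζ ω k = α k • v ω k + (1 - α k) • w ω k)
    (hw : ∀ ω k, w ω (k + 1) = ζ ω k - η • G (ζ ω k) (ω k))
    (hv : ∀ ω k, v ω (k + 1) = v ω k - (γ k * η) • G (ζ ω k) (ω k)) :
    ∀ k : ℕ, 1 ≤ k →
      ExpN n (k + 1) hn (fun ω => f (w ω (k + 1))) - f wstar
        ≤ 2 * ρ ^ 2 * L * ‖w0 - wstar‖ ^ 2 / (k : ℝ) ^ 2 :=
  accelerated_sgd_convex_sgc_general d n hn f f' G ρ L η w0 wstar γ a α w ζ v hL hρ hconv hgrad hlip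
    hunbiased hsgc hη hγ0 hγ ha hα hw0 hv0 hζ hw hv
end
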